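/- Let ν, ℓ be positive integers, and F_a(z) = log Γ(z + a) − log Γ(a) − z log a + z/(2a). Then for any real w and any fixed real part shift, 2ν·Re(F_ν(iw) − F_{ν+ℓ}(iw)) ≤ −ν|w| ∫_{ν/|w|}^{(ν+ℓ)/|w|} dθ/(1 + θ²). -/

import Mathlib

/-- `F_a(z) = log Γ(z + a) − log Γ(a) − z log a + z/(2a)`. -/
noncomputable def Fgamma (a : ℝ) (z : ℂ) : ℂ :=
  Complex.log (Complex.Gamma (z + (a : ℂ))) - Complex.log (Complex.Gamma (a : ℂ))
    - z * Complex.log (a : ℂ) + z / (2 * (a : ℂ))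

/-!
Since `Γ(z + 1) = z Γ(z)`, the real part of `F_a(iw)` grows by `½ log (1 + (w/a)²)` when `a`
increases by one, so `2 Re (F_ν(iw) − F_{ν+ℓ}(iw)) = −∑_{k<ℓ} log (1 + (w/(ν+k))²)`. By
`log x ≥ 1 − 1/x` each term is at least `1/(1 + ((ν+k)/|w|)²)`, and after the substitution
`θ = t/|w|` these are the left-endpoint values of a Riemann sum dominating the integral of the
decreasing function `1/(1 + θ²)`.
-/

open Real in
theorem two_mul_log_norm_mul_I_add_sub_log {a : ℝ} (ha : a ≠ 0) (w : ℝ) :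
    2 * (log ‖(w : ℂ) * Complex.I + a‖ - log a) = log (1 + (w / a) ^ 2) := by
  have hnorm : ‖(w : ℂ) * Complex.I + a‖ ^ 2 = a ^ 2 * (1 + (w / a) ^ 2) := by
    rw [Complex.sq_norm, Complex.normSq_apply]
    simp only [Complex.add_re, Complex.mul_re, Complex.ofReal_re, Complex.I_re, mul_zero,
      Complex.ofReal_im, Complex.I_im, mul_one, sub_self, zero_add, Complex.add_im,
      Complex.mul_im, add_zero]
    field_simp
  have hpos : (0 : ℝ) < 1 + (w / a) ^ 2 := by positivity
  have hlog_sq (x : ℝ) : 2 * log x = log (x ^ 2) := by rw [log_pow]; norm_num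
  rw [mul_sub, hlog_sq, hlog_sq, hnorm, log_mul (by positivity) hpos.ne']
  ring

theorem Fgamma_mul_I_re {a : ℝ} (ha : 0 < a) (w : ℝ) :
    (Fgamma a (w * Complex.I)).re =
      Real.log ‖Complex.Gamma (w * Complex.I + a)‖ - Real.log (Real.Gamma a) := by
  have hlog : Complex.log a = (Real.log a : ℂ) := (Complex.ofReal_log ha.le).symm
  simp [Fgamma, hlog, Complex.div_re, Complex.Gamma_ofReal, Complex.log_re, Complex.norm_real,
    abs_of_pos (Real.Gamma_pos_of_pos ha)]

theorem two_mul_Fgamma_mul_I_re_add_one {a : ℝ} (ha : 0 < a) (w : ℝ) :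
    2 * (Fgamma (a + 1) (w * Complex.I)).re =
      2 * (Fgamma a (w * Complex.I)).re + Real.log (1 + (w / a) ^ 2) := by
  have hz : (w : ℂ) * Complex.I + a ≠ 0 := by
    intro h; simpa [ha.ne'] using congrArg Complex.re h
  have hGamma : Complex.Gamma (w * Complex.I + a) ≠ 0 :=
    Complex.Gamma_ne_zero_of_re_pos (by simpa using ha)
  rw [Fgamma_mul_I_re ha, Fgamma_mul_I_re (by positivity),
    ← two_mul_log_norm_mul_I_add_sub_log ha.ne', Real.Gamma_add_one ha.ne', Complex.ofReal_add,
    Complex.ofReal_one, ← add_assoc, Complex.Gamma_add_one _ hz, norm_mul,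
    Real.log_mul (by simpa using hz) (by simpa using hGamma),
    Real.log_mul ha.ne' (Real.Gamma_pos_of_pos ha).ne']
  ring

theorem two_mul_Fgamma_mul_I_re_add_nat {a : ℝ} (ha : 0 < a) (w : ℝ) (n : ℕ) :
    2 * (Fgamma (a + n) (w * Complex.I)).re =
      2 * (Fgamma a (w * Complex.I)).re +
        ∑ k ∈ Finset.range n, Real.log (1 + (w / (a + k)) ^ 2) := by
  induction n with
  | zero => simp
  | succ n ih =>
    rw [Nat.cast_succ, ← add_assoc, two_mul_Fgamma_mul_I_re_add_one (by positivity), ih,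
      Finset.sum_range_succ, add_assoc]

theorem one_div_one_add_div_abs_sq_le_log {c w : ℝ} (hc : c ≠ 0) (hw : w ≠ 0) :
    1 / (1 + (c / |w|) ^ 2) ≤ Real.log (1 + (w / c) ^ 2) := by
  have h := Real.one_sub_inv_le_log_of_pos (x := 1 + (w / c) ^ 2) (by positivity)
  convert h using 1
  rw [div_pow c, sq_abs]
  field_simp
  ring

theorem mul_integral_one_div_one_add_sq_le_sum {W a : ℝ} (hW : 0 < W) (ha : 0 ≤ a) (n : ℕ) :
    W * ∫ θ in a / W..(a + n) / W, 1 / (1 + θ ^ 2) ≤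
      ∑ k ∈ Finset.range n, 1 / (1 + ((a + k) / W) ^ 2) := by
  have hanti : AntitoneOn (fun t : ℝ => 1 / (1 + (t / W) ^ 2)) (Set.Icc a (a + n)) := by
    intro x hx y _ hxy
    have hx0 : 0 ≤ x := ha.trans hx.1
    dsimp only
    gcongr
  rw [← smul_eq_mul, ← intervalIntegral.integral_comp_div _ hW.ne']
  exact hanti.integral_le_sum

theorem re_F_difference_integral_bound_general (ν ℓ : ℕ) (hν : 1 ≤ ν) (w : ℝ) :
    2 * (ν : ℝ) *
        (Fgamma (ν : ℝ) ((w : ℂ) * Complex.I)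
          - Fgamma ((ν : ℝ) + (ℓ : ℝ)) ((w : ℂ) * Complex.I)).re ≤
      -(ν : ℝ) * |w| *
        ∫ θ in ((ν : ℝ) / |w|)..(((ν : ℝ) + ℓ) / |w|), 1 / (1 + θ ^ 2) := by
  have hν0 : (0 : ℝ) < ν := by exact_mod_cast hν
  have hdiff : 2 * (Fgamma ν (w * Complex.I) - Fgamma (ν + ℓ) (w * Complex.I)).re =
      -∑ k ∈ Finset.range ℓ, Real.log (1 + (w / (ν + k)) ^ 2) := by
    rw [Complex.sub_re, mul_sub, two_mul_Fgamma_mul_I_re_add_nat hν0]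
    ring
  rw [mul_assoc, mul_left_comm, hdiff]
  rcases eq_or_ne w 0 with rfl | hw
  · simp
  have hsum : |w| * ∫ θ in (ν : ℝ) / |w|..(ν + ℓ) / |w|, 1 / (1 + θ ^ 2) ≤
      ∑ k ∈ Finset.range ℓ, Real.log (1 + (w / (ν + k)) ^ 2) :=
    (mul_integral_one_div_one_add_sq_le_sum (abs_pos.mpr hw) hν0.le ℓ).trans <|
      Finset.sum_le_sum fun k _ => one_div_one_add_div_abs_sq_le_log (by positivity) hw
  calc (ν : ℝ) * -∑ k ∈ Finset.range ℓ, Real.log (1 + (w / (ν + k)) ^ 2)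
      ≤ ν * -(|w| * ∫ θ in (ν : ℝ) / |w|..(ν + ℓ) / |w|, 1 / (1 + θ ^ 2)) := by gcongr
    _ = _ := by ring

theorem re_F_difference_integral_bound (ν ℓ : ℕ) (hν : 1 ≤ ν) (hℓ : 1 ≤ ℓ) (w : ℝ) :
    2 * (ν : ℝ) *
        (Fgamma (ν : ℝ) ((w : ℂ) * Complex.I)
          - Fgamma ((ν : ℝ) + (ℓ : ℝ)) ((w : ℂ) * Complex.I)).re ≤
      -(ν : ℝ) * |w| *
        ∫ θ in ((ν : ℝ) / |w|)..(((ν : ℝ) + ℓ) / |w|), 1 / (1 + θ ^ 2) :=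
  re_F_difference_integral_bound_general ν ℓ hν w
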